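/- arXiv:2506.03565 — 4 statements merged into one kernel-verified Lean document; each statement's English description precedes it below -/
import Mathlib

section
/- Let T > 0 (possibly T = ∞), τ ∈ (0,T), A > 0, α > 0 and B > 0 be real numbers. Suppose z : [0,T) → [0,∞) is continuous on [0,T), differentiable on (0,T), and satisfies z'(t) + A·z(t)^α ≤ h(t) for all t ∈ (0,T), where h : (0,T) → [0,∞) is locally integrable and satisfies ∫_t^{t+τ} h(s) ds ≤ B for all t ∈ (0, T−τ). Then z(t) ≤ max{ z(0) + B , (1/τ^{1/α})·(B/A)^{1/α} + 2B } for all t ∈ (0,T). -/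
open MeasureTheory Set Filter Topology

/-!
Fix a level `K ≥ 0` with `B ≤ A τ K^α`. On any window `[u - τ, u]` the bound `z' ≤ h` gives
`z u ≤ z s + B` for every `s` in the window. If `z` drops to `K` somewhere in the window, this
gives `z u ≤ K + B`; if `z > K` throughout, integrating `z' ≤ h - A z^α` over the window gives
`z u ≤ z (u - τ) + B - A τ K^α ≤ z (u - τ)`. Stepping back by `τ` at a time, every value of `z`
is bounded by `max (z 0 + B) (K + B)`, where the first term comes from letting `s → 0` on the
first window. The choice `K = τ^{-1/α} (B/A)^{1/α}` makes `A τ K^α = B`. Each `t < T` lies in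
some `[0, b)` with `τ < b ≤ T` and `b` real, so one may work on `[0, b)`.
-/

structure IsSubsolution (A α b : ℝ) (z h : ℝ → ℝ) : Prop where
  nonneg : ∀ t ∈ Ico 0 b, 0 ≤ z t
  continuousOn : ContinuousOn z (Ico 0 b)
  differentiableAt : ∀ t ∈ Ioo 0 b, DifferentiableAt ℝ z t
  deriv_add_le : ∀ t ∈ Ioo 0 b, deriv z t + A * z t ^ α ≤ h t

structure HasWindowIntegralBound (h : ℝ → ℝ) (b τ B : ℝ) : Prop where
  nonneg : ∀ t ∈ Ioo 0 b, 0 ≤ h t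
  locallyIntegrableOn : LocallyIntegrableOn h (Ioo 0 b)
  integral_le : ∀ t, 0 < t → t + τ < b → ∫ s in t..t + τ, h s ≤ B

lemma exists_window_of_sub_le {b τ s u : ℝ} (hτb : τ < b) (hs : 0 < s) (hus : u - τ ≤ s)
    (hub : u < b) : ∃ c, 0 < c ∧ c ≤ s ∧ u ≤ c + τ ∧ c + τ < b := by
  set m := max (u - τ) 0
  have hm : u - τ ≤ m ∧ 0 ≤ m := ⟨le_max_left _ _, le_max_right _ _⟩
  have hmb : m < b - τ := max_lt (by linarith) (by linarith)
  refine ⟨min s ((m + (b - τ)) / 2), lt_min hs (by linarith), min_le_left _ _, ?_, ?_⟩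
  · linarith [le_min hus (by linarith : u - τ ≤ (m + (b - τ)) / 2)]
  · linarith [min_le_right s ((m + (b - τ)) / 2)]

namespace HasWindowIntegralBound

variable {h : ℝ → ℝ} {b τ B s u : ℝ}

lemma integrableOn_Icc (hw : HasWindowIntegralBound h b τ B) (hs : 0 < s) (hub : u < b) :
    IntegrableOn h (Icc s u) :=
  hw.locallyIntegrableOn.integrableOn_compact_subset
    (Icc_subset_Ioo hs hub) isCompact_Icc

lemma integral_le_of_sub_le (hw : HasWindowIntegralBound h b τ B) (hτb : τ < b) (hs : 0 < s)
    (hsu : s ≤ u) (hus : u - τ ≤ s) (hub : u < b) : ∫ y in s..u, h y ≤ B := by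
  obtain ⟨c, hc, hcs, huc, hcb⟩ := exists_window_of_sub_le hτb hs hus hub
  have hh0 : 0 ≤ᵐ[volume.restrict (Ioc c (c + τ))] h :=
    (ae_restrict_iff' measurableSet_Ioc).2 <| ae_of_all _ fun x hx =>
      hw.nonneg x ⟨hc.trans hx.1, hx.2.trans_lt hcb⟩
  calc ∫ y in s..u, h y ≤ ∫ y in c..c + τ, h y :=
        intervalIntegral.integral_mono_interval hcs hsu huc hh0
          ((intervalIntegrable_iff_integrableOn_Icc_of_le (by linarith)).2
            (hw.integrableOn_Icc hc hcb))
    _ ≤ B := hw.integral_le c hc hcb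

end HasWindowIntegralBound

namespace IsSubsolution

variable {A α b τ B K s u : ℝ} {z h : ℝ → ℝ}

lemma sub_le_integral (hz : IsSubsolution A α b z h) {φ : ℝ → ℝ} (hs : 0 ≤ s) (hsu : s ≤ u)
    (hub : u < b) (hφ : IntegrableOn φ (Icc s u)) (hd : ∀ x ∈ Ioo s u, deriv z x ≤ φ x) :
    z u - z s ≤ ∫ y in s..u, φ y :=
  intervalIntegral.sub_le_integral_of_hasDeriv_right_of_le hsu
    (hz.continuousOn.mono (Icc_subset_Ico hs hub))
    (fun x hx => (hz.differentiableAt x ⟨hs.trans_lt hx.1, hx.2.trans hub⟩).hasDerivAt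
      |>.hasDerivWithinAt) hφ hd

lemma le_add_of_sub_le (hz : IsSubsolution A α b z h) (hw : HasWindowIntegralBound h b τ B)
    (hA : 0 ≤ A) (hτb : τ < b) (hs : 0 < s) (hsu : s ≤ u) (hus : u - τ ≤ s) (hub : u < b) :
    z u ≤ z s + B := by
  have hd : ∀ x ∈ Ioo s u, deriv z x ≤ h x := fun x hx => by
    have hx' : x ∈ Ioo 0 b := ⟨hs.trans hx.1, hx.2.trans hub⟩
    have := hz.deriv_add_le x hx'
    have := mul_nonneg hA (Real.rpow_nonneg (hz.nonneg x (Ioo_subset_Ico_self hx')) α)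
    linarith
  linarith [hz.sub_le_integral hs.le hsu hub (hw.integrableOn_Icc hs hub) hd,
    hw.integral_le_of_sub_le hτb hs hsu hus hub]

lemma le_add_of_le_period (hz : IsSubsolution A α b z h) (hw : HasWindowIntegralBound h b τ B)
    (hA : 0 ≤ A) (hτb : τ < b) (hu : 0 < u) (huτ : u ≤ τ) (hub : u < b) :
    z u ≤ z 0 + B := by
  have hz0 : Tendsto z (𝓝[Ioo 0 u] 0) (𝓝 (z 0)) :=
    (hz.continuousOn 0 ⟨le_rfl, hu.trans hub⟩).mono_left
      (nhdsWithin_mono _ fun x hx => ⟨hx.1.le, hx.2.trans hub⟩)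
  have := left_nhdsWithin_Ioo_neBot hu
  refine sub_le_iff_le_add.1 (ge_of_tendsto hz0 (eventually_mem_nhdsWithin.mono fun s hs => ?_))
  linarith [hz.le_add_of_sub_le hw hA hτb hs.1 hs.2.le (by linarith [hs.1]) hub]

lemma le_of_le_on_window (hz : IsSubsolution A α b z h) (hw : HasWindowIntegralBound h b τ B)
    (hA : 0 ≤ A) (hα : 0 ≤ α) (hτ : 0 ≤ τ) (hτb : τ < b) (hK : 0 ≤ K)
    (hKB : B ≤ A * τ * K ^ α) (hτu : τ < u) (hub : u < b) (hKz : ∀ s ∈ Icc (u - τ) u, K ≤ z s) :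
    z u ≤ z (u - τ) := by
  have hs : 0 < u - τ := by linarith
  have hsu : u - τ ≤ u := by linarith
  have hh : IntegrableOn h (Icc (u - τ) u) := hw.integrableOn_Icc hs hub
  have hzα : IntegrableOn (fun x => z x ^ α) (Icc (u - τ) u) :=
    ((hz.continuousOn.mono (Icc_subset_Ico hs.le hub)).rpow_const
      fun _ _ => Or.inr hα).integrableOn_Icc
  have hd : ∀ x ∈ Ioo (u - τ) u, deriv z x ≤ h x - A * z x ^ α := fun x hx => by
    linarith [hz.deriv_add_le x ⟨hs.trans hx.1, hx.2.trans hub⟩]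
  have hsub := hz.sub_le_integral (φ := fun x => h x - A * z x ^ α) hs.le hsu hub
    (hh.sub (hzα.const_mul A)) hd
  rw [intervalIntegral.integral_sub
      ((intervalIntegrable_iff_integrableOn_Icc_of_le hsu).2 hh)
      ((intervalIntegrable_iff_integrableOn_Icc_of_le hsu).2 (hzα.const_mul A)),
    intervalIntegral.integral_const_mul] at hsub
  have hmass : τ * K ^ α ≤ ∫ y in (u - τ)..u, z y ^ α := by
    calc τ * K ^ α = ∫ _ in (u - τ)..u, K ^ α := by simp
      _ ≤ ∫ y in (u - τ)..u, z y ^ α :=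
        intervalIntegral.integral_mono_on hsu intervalIntegrable_const
          ((intervalIntegrable_iff_integrableOn_Icc_of_le hsu).2 hzα)
          fun x hx => Real.rpow_le_rpow hK (hKz x hx) hα
  linarith [hw.integral_le_of_sub_le hτb hs hsu le_rfl hub, mul_le_mul_of_nonneg_left hmass hA]

lemma le_max_of_sub_period (hz : IsSubsolution A α b z h) (hw : HasWindowIntegralBound h b τ B)
    (hA : 0 ≤ A) (hα : 0 ≤ α) (hτ : 0 ≤ τ) (hτb : τ < b) (hK : 0 ≤ K)
    (hKB : B ≤ A * τ * K ^ α) (hτu : τ < u) (hub : u < b)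
    (hprev : z (u - τ) ≤ max (z 0 + B) (K + B)) :
    z u ≤ max (z 0 + B) (K + B) := by
  by_cases hdip : ∃ s ∈ Icc (u - τ) u, z s ≤ K
  · obtain ⟨s, ⟨hus, hsu⟩, hsK⟩ := hdip
    have := hz.le_add_of_sub_le hw hA hτb (by linarith) hsu hus hub
    exact le_max_of_le_right (by linarith)
  · push Not at hdip
    exact (hz.le_of_le_on_window hw hA hα hτ hτb hK hKB hτu hub fun s hs => (hdip s hs).le).trans
      hprev

theorem le_max (hz : IsSubsolution A α b z h) (hw : HasWindowIntegralBound h b τ B)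
    (hA : 0 ≤ A) (hα : 0 ≤ α) (hτ : 0 < τ) (hτb : τ < b) (hK : 0 ≤ K)
    (hKB : B ≤ A * τ * K ^ α) (hu : 0 < u) (hub : u < b) :
    z u ≤ max (z 0 + B) (K + B) := by
  obtain ⟨n, hn⟩ := exists_nat_ge (u / τ)
  replace hn : u ≤ n * τ + τ := by linarith [(div_le_iff₀ hτ).1 hn]
  induction n generalizing u with
  | zero => exact le_max_of_le_left (hz.le_add_of_le_period hw hA hτb hu (by simpa using hn) hub)
  | succ n ih =>
    rcases le_or_gt u τ with huτ | hτu
    · exact le_max_of_le_left (hz.le_add_of_le_period hw hA hτb hu huτ hub)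
    · refine hz.le_max_of_sub_period hw hA hα hτ.le hτb hK hKB hτu hub ?_
      exact ih (by linarith) (by linarith) (by push_cast at hn; linarith)

end IsSubsolution

theorem stmt_2_general (T : EReal) (τ A α B : ℝ)
    (hτ : 0 < τ) (hτT : (τ : EReal) < T) (hA : 0 < A) (hα : 0 < α) (hB : 0 < B)
    (z h : ℝ → ℝ)
    (hz0 : ∀ t : ℝ, 0 ≤ t → (t : EReal) < T → 0 ≤ z t)
    (hzc : ContinuousOn z {t : ℝ | 0 ≤ t ∧ (t : EReal) < T})
    (hzd : ∀ t : ℝ, 0 < t → (t : EReal) < T → DifferentiableAt ℝ z t)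
    (hh0 : ∀ t : ℝ, 0 < t → (t : EReal) < T → 0 ≤ h t)
    (hhloc : LocallyIntegrableOn h {t : ℝ | 0 < t ∧ (t : EReal) < T})
    (hode : ∀ t : ℝ, 0 < t → (t : EReal) < T → deriv z t + A * z t ^ α ≤ h t)
    (hhB : ∀ t : ℝ, 0 < t → ((t + τ : ℝ) : EReal) < T → ∫ s in t..t + τ, h s ≤ B) :
    ∀ t : ℝ, 0 < t → (t : EReal) < T →
      z t ≤ max (z 0 + B) ((1 / τ ^ (1 / α)) * (B / A) ^ (1 / α) + 2 * B) := by
  intro t ht htT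
  obtain ⟨b, hmaxb, hbT⟩ := EReal.exists_between_coe_real (max_lt htT hτT)
  obtain ⟨htb, hτb⟩ := max_lt_iff.1 hmaxb
  norm_cast at htb hτb
  have hlt : ∀ x : ℝ, x < b → (x : EReal) < T := fun x hx => (EReal.coe_lt_coe_iff.2 hx).trans hbT
  have hz : IsSubsolution A α b z h :=
    ⟨fun x hx => hz0 x hx.1 (hlt x hx.2), hzc.mono fun x hx => ⟨hx.1, hlt x hx.2⟩,
      fun x hx => hzd x hx.1 (hlt x hx.2), fun x hx => hode x hx.1 (hlt x hx.2)⟩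
  have hw : HasWindowIntegralBound h b τ B :=
    ⟨fun x hx => hh0 x hx.1 (hlt x hx.2), hhloc.mono_set fun x hx => ⟨hx.1, hlt x hx.2⟩,
      fun x hx hxb => hhB x hx (hlt _ hxb)⟩
  set K := 1 / τ ^ (1 / α) * (B / A) ^ (1 / α)
  have hKα : K ^ α = B / A / τ := by
    rw [show K = (B / A / τ) ^ (1 / α) by rw [Real.div_rpow (by positivity) hτ.le]; ring,
      ← Real.rpow_mul (by positivity), one_div_mul_cancel hα.ne', Real.rpow_one]
  have hKB : A * τ * K ^ α = B := by
    rw [hKα]; field_simp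
  calc z t ≤ max (z 0 + B) (K + B) :=
        hz.le_max hw hA.le hα.le hτ hτb (by positivity) hKB.ge ht htb
    _ ≤ _ := max_le_max le_rfl (by linarith)

/-- Quantitative boundedness criterion (Lemma 2.3): if `z ≥ 0` is continuous on `[0,T)`,
differentiable on `(0,T)` and satisfies `z' + A z^α ≤ h` on `(0,T)`, where `h ≥ 0` is locally
integrable on `(0,T)` with `∫_t^{t+τ} h ≤ B` for all `t ∈ (0, T-τ)`, then
`z(t) ≤ max { z(0) + B , τ^{-1/α} (B/A)^{1/α} + 2B }` for all `t ∈ (0,T)`.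
Here `T ∈ (0,∞]` is modelled as an extended real number. -/
theorem stmt_2 (T : EReal) (τ A α B : ℝ) (hT : 0 < T)
    (hτ : 0 < τ) (hτT : (τ : EReal) < T) (hA : 0 < A) (hα : 0 < α) (hB : 0 < B)
    (z h : ℝ → ℝ)
    (hz0 : ∀ t : ℝ, 0 ≤ t → (t : EReal) < T → 0 ≤ z t)
    (hzc : ContinuousOn z {t : ℝ | 0 ≤ t ∧ (t : EReal) < T})
    (hzd : ∀ t : ℝ, 0 < t → (t : EReal) < T → DifferentiableAt ℝ z t)
    (hh0 : ∀ t : ℝ, 0 < t → (t : EReal) < T → 0 ≤ h t)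
    (hhloc : LocallyIntegrableOn h {t : ℝ | 0 < t ∧ (t : EReal) < T})
    (hode : ∀ t : ℝ, 0 < t → (t : EReal) < T → deriv z t + A * z t ^ α ≤ h t)
    (hhB : ∀ t : ℝ, 0 < t → ((t + τ : ℝ) : EReal) < T → ∫ s in t..t + τ, h s ≤ B) :
    ∀ t : ℝ, 0 < t → (t : EReal) < T →
      z t ≤ max (z 0 + B) ((1 / τ ^ (1 / α)) * (B / A) ^ (1 / α) + 2 * B) :=
  stmt_2_general T τ A α B hτ hτT hA hα hB z h hz0 hzc hzd hh0 hhloc hode hhB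
end

section
/- Let (X, 𝔪) be a measure space with 𝔪(X) < ∞, let T ∈ (0,∞], and let r₁ ≥ 2, r₂ ≥ 2, μ₁ > 0, μ₂ > 0, r > 0 be real numbers. Suppose u, v, w : [0,T) → (X → ℝ) are families of nonnegative measurable functions such that for every t the functions u(t), v(t), w(t), u(t)^{r₁}, v(t)^{r₂} and u(t)·v(t) are integrable, the mass functions U(t) = ∫_X u(t) d𝔪, V(t) = ∫_X v(t) d𝔪 and W(t) = ∫_X w(t) d𝔪 are continuous on [0,T) and differentiable on (0,T), and satisfy for all t ∈ (0,T): U'(t) = W(t) − μ₁ ∫_X u(t)^{r₁} d𝔪, V'(t) = W(t) + r ∫_X u(t)·v(t) d𝔪 − μ₂ ∫_X v(t)^{r₂} d𝔪, and W'(t) = U(t) + V(t) − W(t). Then there exists a constant C > 0 such that U(t) + V(t) + W(t) ≤ C for all t ∈ [0,T). -/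
/-!
With `a = 1 + r² / (μ₁ μ₂)` and `c = 2 (a + 1)`, the weighted mass `F = a U + V + c W` satisfies
`F' ≤ K - F / 2`. Indeed `c` is chosen so that the `W`-terms of `F'` are exactly `-c W / 2`, and
`r² ≤ a μ₁ μ₂` lets the absorption `a μ₁ u^{r₁} + μ₂ v^{r₂}` dominate the cross term `r u v` and
the linear terms pointwise (through `s² ≤ s^p + 1` for `p ≥ 2`), up to a constant that integrates
to `K`. Then `(F - 2K) e^{t/2}` is nonincreasing, so `F ≤ max (F 0) (2K)`, and `U + V + W ≤ F`.
-/

open MeasureTheory Set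

lemma sq_le_rpow_add_one {s p : ℝ} (hs : 0 ≤ s) (hp : 2 ≤ p) : s ^ 2 ≤ s ^ p + 1 := by
  rcases le_total s 1 with h | h
  · nlinarith [Real.rpow_nonneg hs p]
  · have := Real.rpow_le_rpow_of_exponent_le h hp
    rw [Real.rpow_two] at this
    linarith

lemma mul_add_add_le_sq_add_sq {κ μ r α β u v : ℝ} (hκ : 0 < κ) (hμ : 0 < μ)
    (hr : r ^ 2 ≤ κ * μ) :
    r * u * v + α * u + β * v ≤ κ * u ^ 2 + μ * v ^ 2 + (α ^ 2 / (2 * κ) + β ^ 2 / (2 * μ)) := by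
  have hcross : r * u * v ≤ κ / 2 * u ^ 2 + μ / 2 * v ^ 2 := by
    nlinarith [sq_nonneg (κ * u - r * v), mul_nonneg (sub_nonneg.2 hr) (sq_nonneg v)]
  have hu : α * u ≤ κ / 2 * u ^ 2 + α ^ 2 / (2 * κ) := by
    have : κ / 2 * u ^ 2 + α ^ 2 / (2 * κ) - α * u = (κ * u - α) ^ 2 / (2 * κ) := by
      field_simp; ring
    nlinarith [div_nonneg (sq_nonneg (κ * u - α)) (by positivity : (0:ℝ) ≤ 2 * κ)]
  have hv : β * v ≤ μ / 2 * v ^ 2 + β ^ 2 / (2 * μ) := by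
    have : μ / 2 * v ^ 2 + β ^ 2 / (2 * μ) - β * v = (μ * v - β) ^ 2 / (2 * μ) := by
      field_simp; ring
    nlinarith [div_nonneg (sq_nonneg (μ * v - β)) (by positivity : (0:ℝ) ≤ 2 * μ)]
  linarith

lemma mul_add_add_le_rpow_add_rpow {p q κ μ r α β u v : ℝ} (hp : 2 ≤ p) (hq : 2 ≤ q)
    (hκ : 0 < κ) (hμ : 0 < μ) (hr : r ^ 2 ≤ κ * μ) (hu : 0 ≤ u) (hv : 0 ≤ v) :
    r * u * v + α * u + β * v ≤
      κ * u ^ p + μ * v ^ q + (κ + μ + α ^ 2 / (2 * κ) + β ^ 2 / (2 * μ)) := by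
  have := mul_add_add_le_sq_add_sq (α := α) (β := β) (u := u) (v := v) hκ hμ hr
  nlinarith [mul_le_mul_of_nonneg_left (sq_le_rpow_add_one hu hp) hκ.le,
    mul_le_mul_of_nonneg_left (sq_le_rpow_add_one hv hq) hμ.le]

lemma le_max_of_hasDerivAt_le_sub_mul {F F' : ℝ → ℝ} {a b K ρ : ℝ} (hab : a ≤ b) (hρ : 0 < ρ)
    (hF : ContinuousOn F (Icc a b)) (hF' : ∀ s ∈ Ioo a b, HasDerivAt F (F' s) s)
    (hle : ∀ s ∈ Ioo a b, F' s ≤ K - ρ * F s) : F b ≤ max (F a) (K / ρ) := by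
  set g : ℝ → ℝ := fun s ↦ (F s - K / ρ) * Real.exp (ρ * s)
  have hg' : ∀ s ∈ Ioo a b, HasDerivAt g ((F' s + ρ * F s - K) * Real.exp (ρ * s)) s := by
    intro s hs
    have hexp : HasDerivAt (fun s ↦ Real.exp (ρ * s)) (Real.exp (ρ * s) * ρ) s := by
      simpa using ((hasDerivAt_id s).const_mul ρ).exp
    exact (((hF' s hs).sub_const (K / ρ)).mul hexp).congr_deriv (by field_simp; ring)
  have hg_anti : AntitoneOn g (Icc a b) := by
    refine antitoneOn_of_deriv_nonpos (convex_Icc a b) ?_ ?_ ?_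
    · exact (hF.sub continuousOn_const).mul (by fun_prop)
    · rw [interior_Icc]
      exact fun s hs ↦ (hg' s hs).differentiableAt.differentiableWithinAt
    · rw [interior_Icc]
      intro s hs
      rw [(hg' s hs).deriv]
      exact mul_nonpos_of_nonpos_of_nonneg (by linarith [hle s hs]) (Real.exp_pos _).le
  rcases le_or_gt (F b) (K / ρ) with h | h
  · exact le_max_of_le_right h
  have hexp : Real.exp (ρ * a) ≤ Real.exp (ρ * b) := Real.exp_le_exp.2 (by nlinarith)
  have hgab : g b ≤ g a := hg_anti (left_mem_Icc.2 hab) (right_mem_Icc.2 hab) hab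
  have : (F b - K / ρ) * Real.exp (ρ * a) ≤ (F a - K / ρ) * Real.exp (ρ * a) :=
    (mul_le_mul_of_nonneg_left hexp (by linarith)).trans hgab
  exact le_max_of_le_left (by linarith [le_of_mul_le_mul_right this (Real.exp_pos _)])

lemma le_max_of_hasDerivAt_le_sub_mul_of_coe_lt {F F' : ℝ → ℝ} {T : EReal} {K ρ : ℝ}
    (hρ : 0 < ρ)
    (hF : ContinuousOn F {t : ℝ | 0 ≤ t ∧ (t : EReal) < T})
    (hF' : ∀ t : ℝ, 0 < t → (t : EReal) < T → HasDerivAt F (F' t) t)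
    (hle : ∀ t : ℝ, 0 < t → (t : EReal) < T → F' t ≤ K - ρ * F t)
    {t : ℝ} (ht : 0 ≤ t) (htT : (t : EReal) < T) : F t ≤ max (F 0) (K / ρ) := by
  have hIoo {s : ℝ} (hs : s ∈ Ioo 0 t) : (s : EReal) < T :=
    (EReal.coe_lt_coe_iff.2 hs.2).trans htT
  refine le_max_of_hasDerivAt_le_sub_mul ht hρ (hF.mono fun s hs ↦ ?_)
    (fun s hs ↦ hF' s hs.1 (hIoo hs)) (fun s hs ↦ hle s hs.1 (hIoo hs))
  exact ⟨hs.1, (EReal.coe_le_coe_iff.2 hs.2).trans_lt htT⟩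

lemma integral_mul_add_add_le {X : Type*} [MeasurableSpace X] (𝔪 : Measure X) [IsFiniteMeasure 𝔪]
    {f g : X → ℝ} {p q κ μ r α β K : ℝ} (hf : Integrable f 𝔪) (hg : Integrable g 𝔪)
    (hfp : Integrable (fun x ↦ f x ^ p) 𝔪) (hgq : Integrable (fun x ↦ g x ^ q) 𝔪)
    (hfg : Integrable (fun x ↦ f x * g x) 𝔪)
    (hle : ∀ x, r * f x * g x + α * f x + β * g x ≤ κ * f x ^ p + μ * g x ^ q + K) :
    r * (∫ x, f x * g x ∂𝔪) + α * (∫ x, f x ∂𝔪) + β * ∫ x, g x ∂𝔪 ≤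
      κ * (∫ x, f x ^ p ∂𝔪) + μ * (∫ x, g x ^ q ∂𝔪) + K * 𝔪.real univ := by
  have hlhs : Integrable (fun x ↦ r * (f x * g x) + α * f x) 𝔪 :=
    (hfg.const_mul r).add (hf.const_mul α)
  have hrhs : Integrable (fun x ↦ κ * f x ^ p + μ * g x ^ q) 𝔪 :=
    (hfp.const_mul κ).add (hgq.const_mul μ)
  have h := integral_mono (f := fun x ↦ r * (f x * g x) + α * f x + β * g x)
    (g := fun x ↦ κ * f x ^ p + μ * g x ^ q + K)
    (hlhs.add (hg.const_mul β)) (hrhs.add (integrable_const K))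
    fun x ↦ by simpa only [mul_assoc] using hle x
  rwa [integral_add hlhs (hg.const_mul β), integral_add (hfg.const_mul r) (hf.const_mul α),
    integral_add hrhs (integrable_const K), integral_add (hfp.const_mul κ) (hgq.const_mul μ),
    integral_const, smul_eq_mul, mul_comm _ K, integral_const_mul, integral_const_mul,
    integral_const_mul, integral_const_mul, integral_const_mul] at h

theorem stmt_4_general {X : Type*} [MeasurableSpace X] (𝔪 : Measure X) [IsFiniteMeasure 𝔪]
    (T : EReal)
    (r₁ r₂ μ₁ μ₂ r : ℝ) (hr₁ : 2 ≤ r₁) (hr₂ : 2 ≤ r₂)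
    (hμ₁ : 0 < μ₁) (hμ₂ : 0 < μ₂)
    (u v w : ℝ → X → ℝ)
    (hu0 : ∀ t x, 0 ≤ u t x) (hv0 : ∀ t x, 0 ≤ v t x) (hw0 : ∀ t x, 0 ≤ w t x)
    (hui : ∀ t : ℝ, 0 ≤ t → (t : EReal) < T → Integrable (u t) 𝔪)
    (hvi : ∀ t : ℝ, 0 ≤ t → (t : EReal) < T → Integrable (v t) 𝔪)
    (hur : ∀ t : ℝ, 0 ≤ t → (t : EReal) < T → Integrable (fun x => u t x ^ r₁) 𝔪)
    (hvr : ∀ t : ℝ, 0 ≤ t → (t : EReal) < T → Integrable (fun x => v t x ^ r₂) 𝔪)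
    (huv : ∀ t : ℝ, 0 ≤ t → (t : EReal) < T → Integrable (fun x => u t x * v t x) 𝔪)
    (U V W : ℝ → ℝ)
    (hU : ∀ t, U t = ∫ x, u t x ∂𝔪) (hV : ∀ t, V t = ∫ x, v t x ∂𝔪)
    (hW : ∀ t, W t = ∫ x, w t x ∂𝔪)
    (hUc : ContinuousOn U {t : ℝ | 0 ≤ t ∧ (t : EReal) < T})
    (hVc : ContinuousOn V {t : ℝ | 0 ≤ t ∧ (t : EReal) < T})
    (hWc : ContinuousOn W {t : ℝ | 0 ≤ t ∧ (t : EReal) < T})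
    (hU' : ∀ t : ℝ, 0 < t → (t : EReal) < T →
      HasDerivAt U (W t - μ₁ * ∫ x, u t x ^ r₁ ∂𝔪) t)
    (hV' : ∀ t : ℝ, 0 < t → (t : EReal) < T →
      HasDerivAt V (W t + r * (∫ x, u t x * v t x ∂𝔪) - μ₂ * ∫ x, v t x ^ r₂ ∂𝔪) t)
    (hW' : ∀ t : ℝ, 0 < t → (t : EReal) < T →
      HasDerivAt W (U t + V t - W t) t) :
    ∃ C : ℝ, 0 < C ∧ ∀ t : ℝ, 0 ≤ t → (t : EReal) < T → U t + V t + W t ≤ C := by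
  set a := 1 + r ^ 2 / (μ₁ * μ₂)
  set c := 2 * (a + 1)
  have ha : 1 ≤ a := le_add_of_nonneg_right (by positivity)
  have hr_sq : r ^ 2 ≤ a * μ₁ * μ₂ := by
    have : a * μ₁ * μ₂ = μ₁ * μ₂ + r ^ 2 := by simp only [a]; field_simp
    nlinarith [mul_pos hμ₁ hμ₂]
  set K := (a * μ₁ + μ₂ + (c + a / 2) ^ 2 / (2 * (a * μ₁)) + (c + 1 / 2) ^ 2 / (2 * μ₂)) *
    𝔪.real univ
  set F := fun t ↦ a * U t + V t + c * W t
  set F' := fun t ↦ a * (W t - μ₁ * ∫ x, u t x ^ r₁ ∂𝔪) +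
    (W t + r * (∫ x, u t x * v t x ∂𝔪) - μ₂ * ∫ x, v t x ^ r₂ ∂𝔪) + c * (U t + V t - W t)
  have hU0 (t : ℝ) : 0 ≤ U t := hU t ▸ integral_nonneg (hu0 t)
  have hV0 (t : ℝ) : 0 ≤ V t := hV t ▸ integral_nonneg (hv0 t)
  have hW0 (t : ℝ) : 0 ≤ W t := hW t ▸ integral_nonneg (hw0 t)
  have hF_ge (t : ℝ) : U t + V t + W t ≤ F t := by
    nlinarith [hU0 t, hV0 t, hW0 t]
  have hF' (t : ℝ) (ht : 0 < t) (htT : (t : EReal) < T) : HasDerivAt F (F' t) t :=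
    (((hU' t ht htT).const_mul a).add (hV' t ht htT)).add ((hW' t ht htT).const_mul c)
  have hF'_le (t : ℝ) (ht : 0 < t) (htT : (t : EReal) < T) : F' t ≤ K - 1 / 2 * F t := by
    have hmass := integral_mul_add_add_le 𝔪 (hui t ht.le htT) (hvi t ht.le htT) (hur t ht.le htT)
      (hvr t ht.le htT) (huv t ht.le htT) (α := c + a / 2) (β := c + 1 / 2)
      fun x ↦ mul_add_add_le_rpow_add_rpow hr₁ hr₂ (by positivity) hμ₂ hr_sq (hu0 t x) (hv0 t x)
    simp only [F, F', K, hU, hV, hW] at hmass ⊢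
    linarith
  refine ⟨max (F 0) (K / (1 / 2)) + 1, ?_, fun t ht0 htT ↦ ?_⟩
  · linarith [hF_ge 0, hU0 0, hV0 0, hW0 0, le_max_left (F 0) (K / (1 / 2))]
  have hFt := le_max_of_hasDerivAt_le_sub_mul_of_coe_lt (F := F) one_half_pos
    (((hUc.const_smul a).add hVc).add (hWc.const_smul c)) hF' hF'_le ht0 htT
  linarith [hF_ge t]

/-- Uniform-in-time L¹ bound (Lemma 3.2) on an abstract finite measure space: if the masses
`U, V, W` of the nonnegative families `u, v, w` satisfy the ODE system obtained by integrating
the Alopecia Areata chemotaxis system with Neumann boundary conditions, then `U + V + W` is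
bounded on `[0,T)`. Here `T ∈ (0,∞]` is modelled as an extended real number. -/
theorem stmt_4 {X : Type*} [MeasurableSpace X] (𝔪 : Measure X) [IsFiniteMeasure 𝔪]
    (T : EReal) (hT : 0 < T)
    (r₁ r₂ μ₁ μ₂ r : ℝ) (hr₁ : 2 ≤ r₁) (hr₂ : 2 ≤ r₂)
    (hμ₁ : 0 < μ₁) (hμ₂ : 0 < μ₂) (hr : 0 < r)
    (u v w : ℝ → X → ℝ)
    (hum : ∀ t : ℝ, Measurable (u t)) (hvm : ∀ t : ℝ, Measurable (v t))
    (hwm : ∀ t : ℝ, Measurable (w t))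
    (hu0 : ∀ t x, 0 ≤ u t x) (hv0 : ∀ t x, 0 ≤ v t x) (hw0 : ∀ t x, 0 ≤ w t x)
    (hui : ∀ t : ℝ, 0 ≤ t → (t : EReal) < T → Integrable (u t) 𝔪)
    (hvi : ∀ t : ℝ, 0 ≤ t → (t : EReal) < T → Integrable (v t) 𝔪)
    (hwi : ∀ t : ℝ, 0 ≤ t → (t : EReal) < T → Integrable (w t) 𝔪)
    (hur : ∀ t : ℝ, 0 ≤ t → (t : EReal) < T → Integrable (fun x => u t x ^ r₁) 𝔪)
    (hvr : ∀ t : ℝ, 0 ≤ t → (t : EReal) < T → Integrable (fun x => v t x ^ r₂) 𝔪)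
    (huv : ∀ t : ℝ, 0 ≤ t → (t : EReal) < T → Integrable (fun x => u t x * v t x) 𝔪)
    (U V W : ℝ → ℝ)
    (hU : ∀ t, U t = ∫ x, u t x ∂𝔪) (hV : ∀ t, V t = ∫ x, v t x ∂𝔪)
    (hW : ∀ t, W t = ∫ x, w t x ∂𝔪)
    (hUc : ContinuousOn U {t : ℝ | 0 ≤ t ∧ (t : EReal) < T})
    (hVc : ContinuousOn V {t : ℝ | 0 ≤ t ∧ (t : EReal) < T})
    (hWc : ContinuousOn W {t : ℝ | 0 ≤ t ∧ (t : EReal) < T})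
    (hU' : ∀ t : ℝ, 0 < t → (t : EReal) < T →
      HasDerivAt U (W t - μ₁ * ∫ x, u t x ^ r₁ ∂𝔪) t)
    (hV' : ∀ t : ℝ, 0 < t → (t : EReal) < T →
      HasDerivAt V (W t + r * (∫ x, u t x * v t x ∂𝔪) - μ₂ * ∫ x, v t x ^ r₂ ∂𝔪) t)
    (hW' : ∀ t : ℝ, 0 < t → (t : EReal) < T →
      HasDerivAt W (U t + V t - W t) t) :
    ∃ C : ℝ, 0 < C ∧ ∀ t : ℝ, 0 ≤ t → (t : EReal) < T → U t + V t + W t ≤ C :=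
  stmt_4_general 𝔪 T r₁ r₂ μ₁ μ₂ r hr₁ hr₂ hμ₁ hμ₂ u v w hu0 hv0 hw0 hui hvi hur hvr huv U V W hU hV
    hW hUc hVc hWc hU' hV' hW'
end

section
/- Let (X, 𝔪) be a measure space with 𝔪(X) < ∞, let T ∈ (0,∞], and let μ₁ > 0, μ₂ > 0, r > 0 be real numbers. Suppose u, v, w : [0,T) → (X → ℝ) are families of nonnegative measurable functions such that for every t the functions u(t), v(t), w(t), u(t)², v(t)² and u(t)·v(t) are integrable, the mass functions U(t) = ∫_X u(t) d𝔪, V(t) = ∫_X v(t) d𝔪 and W(t) = ∫_X w(t) d𝔪 are continuous on [0,T) and differentiable on (0,T), the maps t ↦ ∫_X u(t)² d𝔪 and t ↦ ∫_X v(t)² d𝔪 are locally integrable on (0,T), and for all t ∈ (0,T): U'(t) = W(t) − μ₁ ∫_X u(t)² d𝔪, V'(t) = W(t) + r ∫_X u(t)·v(t) d𝔪 − μ₂ ∫_X v(t)² d𝔪, and W'(t) = U(t) + V(t) − W(t). Let τ = min{1, T/4} if T < ∞ and τ = 1 if T = ∞. Then there exists a constant C > 0 such that ∫_t^{t+τ}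 ( ∫_X u(s)² d𝔪 + ∫_X v(s)² d𝔪 ) ds ≤ C for all t ∈ (0, T − τ). -/
/-!
The functional `G = a U + V + (a + 2) W` with `a = 1 + r² / (2 μ₁ μ₂)` satisfies
`G' + G / (a + 2) + κ (∫ u² + ∫ v²) ≤ C` with `κ = min (μ₁ / 2) (μ₂ / 4)`, by Young's inequality
for the cross term `r ∫ u v` and for the masses `U ≤ ε ∫ u² + 𝔪(X) / (4 ε)`, `V` likewise.
Dropping the dissipation term, comparison with an exponential bounds `G` uniformly; integrating
`G' + κ (∫ u² + ∫ v²) ≤ C` over a window of length `τ` then bounds the space-time integral by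
`C τ + sup G`.
-/

open MeasureTheory Set

lemma mul_mul_le_sq_add_sq {ε : ℝ} (hε : 0 < ε) (r x y : ℝ) :
    r * (x * y) ≤ r ^ 2 / (2 * ε) * x ^ 2 + ε / 2 * y ^ 2 := by
  have key : r ^ 2 / (2 * ε) * x ^ 2 + ε / 2 * y ^ 2 - r * (x * y)
      = (r * x - ε * y) ^ 2 / (2 * ε) := by
    field_simp
    ring
  rw [← sub_nonneg, key]
  positivity

lemma mul_le_sq_add {ε : ℝ} (hε : 0 < ε) (c x : ℝ) :
    c * x ≤ ε * x ^ 2 + c ^ 2 / (4 * ε) := by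
  have key : ε * x ^ 2 + c ^ 2 / (4 * ε) - c * x = (2 * ε * x - c) ^ 2 / (4 * ε) := by
    field_simp
    ring
  rw [← sub_nonneg, key]
  positivity

section Young

variable {X : Type*} [MeasurableSpace X] {𝔪 : Measure X} {f g : X → ℝ}

lemma mul_integral_mul_le {ε : ℝ} (hε : 0 < ε) (r : ℝ)
    (hfg : Integrable (fun x => f x * g x) 𝔪) (hf : Integrable (fun x => f x ^ 2) 𝔪)
    (hg : Integrable (fun x => g x ^ 2) 𝔪) :
    r * ∫ x, f x * g x ∂𝔪 ≤ r ^ 2 / (2 * ε) * ∫ x, f x ^ 2 ∂𝔪 + ε / 2 * ∫ x, g x ^ 2 ∂𝔪 := by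
  rw [← integral_const_mul, ← integral_const_mul, ← integral_const_mul,
    ← integral_add (hf.const_mul _) (hg.const_mul _)]
  exact integral_mono (hfg.const_mul r) ((hf.const_mul _).add (hg.const_mul _))
    fun x => mul_mul_le_sq_add_sq hε r (f x) (g x)

lemma mul_integral_le [IsFiniteMeasure 𝔪] {ε : ℝ} (hε : 0 < ε) (c : ℝ) (hf : Integrable f 𝔪)
    (hf2 : Integrable (fun x => f x ^ 2) 𝔪) :
    c * ∫ x, f x ∂𝔪 ≤ ε * ∫ x, f x ^ 2 ∂𝔪 + c ^ 2 / (4 * ε) * 𝔪.real univ := by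
  calc c * ∫ x, f x ∂𝔪 = ∫ x, c * f x ∂𝔪 := (integral_const_mul c _).symm
    _ ≤ ∫ x, (ε * f x ^ 2 + c ^ 2 / (4 * ε)) ∂𝔪 :=
      integral_mono (hf.const_mul c) ((hf2.const_mul ε).add (integrable_const _))
        fun x => mul_le_sq_add hε c (f x)
    _ = ε * ∫ x, f x ^ 2 ∂𝔪 + c ^ 2 / (4 * ε) * 𝔪.real univ := by
      rw [integral_add (hf2.const_mul ε) (integrable_const _), integral_const_mul,
        integral_const, smul_eq_mul, mul_comm (𝔪.real univ)]

end Young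

section Comparison

variable {f f' q : ℝ → ℝ} {a b k C : ℝ}

/-- Compares `f` with the solution of `y' + k y = C`: `(f - C / k) e^{k (x - a)}` is antitone. -/
lemma le_max_of_hasDerivAt_add_mul_le (hk : 0 < k) (hab : a ≤ b)
    (hf : ContinuousOn f (Icc a b)) (hf' : ∀ x ∈ Ioo a b, HasDerivAt f (f' x) x)
    (hle : ∀ x ∈ Ioo a b, f' x + k * f x ≤ C) :
    f b ≤ max (f a) (C / k) := by
  set φ : ℝ → ℝ := fun x => (f x - C / k) * Real.exp (k * (x - a))
  have hφ' : ∀ x ∈ Ioo a b,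
      HasDerivAt φ (Real.exp (k * (x - a)) * (f' x + k * f x - C)) x := by
    intro x hx
    have hexp : HasDerivAt (fun x => Real.exp (k * (x - a))) (Real.exp (k * (x - a)) * k) x := by
      simpa using (((hasDerivAt_id x).sub_const a).const_mul k).exp
    refine (((hf' x hx).sub_const (C / k)).mul hexp).congr_deriv ?_
    field_simp
    ring
  have hanti : AntitoneOn φ (Icc a b) := by
    refine antitoneOn_of_deriv_nonpos (convex_Icc a b) ?_ ?_ ?_
    · exact (hf.sub continuousOn_const).mul (by fun_prop)
    · rw [interior_Icc]
      exact fun x hx => (hφ' x hx).differentiableAt.differentiableWithinAt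
    · rw [interior_Icc]
      intro x hx
      rw [(hφ' x hx).deriv]
      exact mul_nonpos_of_nonneg_of_nonpos (Real.exp_nonneg _) (by linarith [hle x hx])
  have hφab : φ b ≤ φ a := hanti (left_mem_Icc.2 hab) (right_mem_Icc.2 hab) hab
  rcases le_or_gt (f b) (C / k) with hb | hb
  · exact le_max_of_le_right hb
  · refine le_max_of_le_left ?_
    have hgrowth : f b - C / k ≤ φ b :=
      le_mul_of_one_le_right (by linarith) (Real.one_le_exp (by nlinarith))
    simp only [φ, sub_self, mul_zero, Real.exp_zero, mul_one] at hφab hgrowth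
    linarith

lemma integral_le_of_hasDerivAt_add_le (hab : a ≤ b) (hf : ContinuousOn f (Icc a b))
    (hf' : ∀ x ∈ Ioo a b, HasDerivAt f (f' x) x) (hq : IntegrableOn q (Icc a b))
    (hle : ∀ x ∈ Ioo a b, f' x + q x ≤ C) :
    ∫ x in a..b, q x ≤ C * (b - a) + f a - f b := by
  have := intervalIntegral.integral_le_sub_of_hasDeriv_right_of_le (g := fun x => C * x - f x)
    hab (by fun_prop)
    (fun x hx => (((hasDerivAt_id x).const_mul C).sub (hf' x hx)).hasDerivWithinAt) hq
    fun x hx => by linarith [hle x hx]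
  linarith

end Comparison

lemma integral_le_of_hasDerivAt_add_mul_add_le {T : EReal} {G G' q : ℝ → ℝ} {k C : ℝ}
    (hk : 0 < k) (hG : ContinuousOn G {t : ℝ | 0 ≤ t ∧ (t : EReal) < T})
    (hG' : ∀ t : ℝ, 0 < t → (t : EReal) < T → HasDerivAt G (G' t) t)
    (hG_nonneg : ∀ t : ℝ, 0 ≤ t → (t : EReal) < T → 0 ≤ G t)
    (hq : LocallyIntegrableOn q {t : ℝ | 0 < t ∧ (t : EReal) < T})
    (hq_nonneg : ∀ t : ℝ, 0 < t → (t : EReal) < T → 0 ≤ q t)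
    (hle : ∀ t : ℝ, 0 < t → (t : EReal) < T → G' t + k * G t + q t ≤ C)
    {t τ : ℝ} (ht : 0 < t) (hτ : 0 ≤ τ) (htT : ((t + τ : ℝ) : EReal) < T) :
    ∫ s in t..t + τ, q s ≤ C * τ + max (G 0) (C / k) := by
  have hlt : ∀ s ≤ t + τ, (s : EReal) < T := fun s hs => (EReal.coe_le_coe_iff.2 hs).trans_lt htT
  have hGt : G t ≤ max (G 0) (C / k) :=
    le_max_of_hasDerivAt_add_mul_le hk ht.le
      (hG.mono fun s hs => ⟨hs.1, hlt s (by linarith [hs.2])⟩)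
      (fun s hs => hG' s hs.1 (hlt s (by linarith [hs.2])))
      fun s hs => by
        have hsT := hlt s (by linarith [hs.2])
        linarith [hle s hs.1 hsT, hq_nonneg s hs.1 hsT]
  have hwindow := integral_le_of_hasDerivAt_add_le (C := C) (le_add_of_nonneg_right hτ)
    (hG.mono fun s hs => ⟨ht.le.trans hs.1, hlt s hs.2⟩)
    (fun s hs => hG' s (ht.trans hs.1) (hlt s hs.2.le))
    (hq.integrableOn_compact_subset (fun s hs => ⟨ht.trans_le hs.1, hlt s hs.2⟩) isCompact_Icc)
    fun s hs => by
      have hs₀ := ht.trans hs.1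
      have hsT := hlt s hs.2.le
      nlinarith [hle s hs₀ hsT, hG_nonneg s hs₀.le hsT]
  linarith [hG_nonneg (t + τ) (by linarith) htT]

/-- The weight `a` absorbs the cross term (`a μ₁ = μ₁ + r² / (2 μ₂)`), and the weight `a + 2`
of `W` together with the rate `(a + 2)⁻¹` makes all `W`-terms cancel. -/
lemma lyapunov_dissipation_le {μ₁ μ₂ r a U V W Q₁ Q₂ Q₁₂ K₁ K₂ : ℝ} (ha₀ : 0 ≤ a)
    (ha : a * μ₁ = μ₁ + r ^ 2 / (2 * μ₂)) (hU : 0 ≤ U) (hV : 0 ≤ V)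
    (hQ₁ : 0 ≤ Q₁) (hQ₂ : 0 ≤ Q₂) (hcross : r * Q₁₂ ≤ r ^ 2 / (2 * μ₂) * Q₁ + μ₂ / 2 * Q₂)
    (hUQ : (a + 3) * U ≤ μ₁ / 2 * Q₁ + K₁) (hVQ : (a + 3) * V ≤ μ₂ / 4 * Q₂ + K₂) :
    a * (W - μ₁ * Q₁) + (W + r * Q₁₂ - μ₂ * Q₂) + (a + 2) * (U + V - W)
      + (a + 2)⁻¹ * (a * U + V + (a + 2) * W) + min (μ₁ / 2) (μ₂ / 4) * (Q₁ + Q₂) ≤ K₁ + K₂ := by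
  have hG : (a + 2)⁻¹ * (a * U + V + (a + 2) * W) ≤ U + V + W := by
    rw [inv_mul_le_iff₀ (by positivity)]
    nlinarith
  have hκ₁ : min (μ₁ / 2) (μ₂ / 4) * Q₁ ≤ μ₁ / 2 * Q₁ :=
    mul_le_mul_of_nonneg_right (min_le_left _ _) hQ₁
  have hκ₂ : min (μ₁ / 2) (μ₂ / 4) * Q₂ ≤ μ₂ / 4 * Q₂ :=
    mul_le_mul_of_nonneg_right (min_le_right _ _) hQ₂
  have haQ : a * μ₁ * Q₁ = (μ₁ + r ^ 2 / (2 * μ₂)) * Q₁ := by rw [ha]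
  linarith

lemma integral_lyapunov_dissipation_le {X : Type*} [MeasurableSpace X] {𝔪 : Measure X}
    [IsFiniteMeasure 𝔪] {μ₁ μ₂ r a W : ℝ} {u v : X → ℝ} (hμ₁ : 0 < μ₁) (hμ₂ : 0 < μ₂)
    (ha₀ : 0 ≤ a) (ha : a * μ₁ = μ₁ + r ^ 2 / (2 * μ₂)) (hu0 : ∀ x, 0 ≤ u x) (hv0 : ∀ x, 0 ≤ v x)
    (hu : Integrable u 𝔪) (hv : Integrable v 𝔪) (hu2 : Integrable (fun x => u x ^ 2) 𝔪)
    (hv2 : Integrable (fun x => v x ^ 2) 𝔪) (huv : Integrable (fun x => u x * v x) 𝔪) :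
    a * (W - μ₁ * ∫ x, u x ^ 2 ∂𝔪) + (W + r * (∫ x, u x * v x ∂𝔪) - μ₂ * ∫ x, v x ^ 2 ∂𝔪)
      + (a + 2) * ((∫ x, u x ∂𝔪) + (∫ x, v x ∂𝔪) - W)
      + (a + 2)⁻¹ * (a * (∫ x, u x ∂𝔪) + (∫ x, v x ∂𝔪) + (a + 2) * W)
      + min (μ₁ / 2) (μ₂ / 4) * ((∫ x, u x ^ 2 ∂𝔪) + ∫ x, v x ^ 2 ∂𝔪)
      ≤ (a + 3) ^ 2 / (4 * (μ₁ / 2)) * 𝔪.real univ + (a + 3) ^ 2 / (4 * (μ₂ / 4)) * 𝔪.real univ :=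
  lyapunov_dissipation_le ha₀ ha (integral_nonneg hu0) (integral_nonneg hv0)
    (integral_nonneg fun x => sq_nonneg (u x)) (integral_nonneg fun x => sq_nonneg (v x))
    (mul_integral_mul_le hμ₂ r huv hu2 hv2) (mul_integral_le (by positivity) (a + 3) hu hu2)
    (mul_integral_le (by positivity) (a + 3) hv hv2)

theorem stmt_5_general {X : Type*} [MeasurableSpace X] (𝔪 : Measure X) [IsFiniteMeasure 𝔪]
    (T : EReal)
    (μ₁ μ₂ r : ℝ) (hμ₁ : 0 < μ₁) (hμ₂ : 0 < μ₂)
    (u v w : ℝ → X → ℝ)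
    (hu0 : ∀ t x, 0 ≤ u t x) (hv0 : ∀ t x, 0 ≤ v t x) (hw0 : ∀ t x, 0 ≤ w t x)
    (hui : ∀ t : ℝ, 0 ≤ t → (t : EReal) < T → Integrable (u t) 𝔪)
    (hvi : ∀ t : ℝ, 0 ≤ t → (t : EReal) < T → Integrable (v t) 𝔪)
    (hu2 : ∀ t : ℝ, 0 ≤ t → (t : EReal) < T → Integrable (fun x => u t x ^ 2) 𝔪)
    (hv2 : ∀ t : ℝ, 0 ≤ t → (t : EReal) < T → Integrable (fun x => v t x ^ 2) 𝔪)
    (huv : ∀ t : ℝ, 0 ≤ t → (t : EReal) < T → Integrable (fun x => u t x * v t x) 𝔪)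
    (U V W : ℝ → ℝ)
    (hU : ∀ t, U t = ∫ x, u t x ∂𝔪) (hV : ∀ t, V t = ∫ x, v t x ∂𝔪)
    (hW : ∀ t, W t = ∫ x, w t x ∂𝔪)
    (hUc : ContinuousOn U {t : ℝ | 0 ≤ t ∧ (t : EReal) < T})
    (hVc : ContinuousOn V {t : ℝ | 0 ≤ t ∧ (t : EReal) < T})
    (hWc : ContinuousOn W {t : ℝ | 0 ≤ t ∧ (t : EReal) < T})
    (hu2loc : LocallyIntegrableOn (fun t => ∫ x, u t x ^ 2 ∂𝔪)
      {t : ℝ | 0 < t ∧ (t : EReal) < T})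
    (hv2loc : LocallyIntegrableOn (fun t => ∫ x, v t x ^ 2 ∂𝔪)
      {t : ℝ | 0 < t ∧ (t : EReal) < T})
    (hU' : ∀ t : ℝ, 0 < t → (t : EReal) < T →
      HasDerivAt U (W t - μ₁ * ∫ x, u t x ^ 2 ∂𝔪) t)
    (hV' : ∀ t : ℝ, 0 < t → (t : EReal) < T →
      HasDerivAt V (W t + r * (∫ x, u t x * v t x ∂𝔪) - μ₂ * ∫ x, v t x ^ 2 ∂𝔪) t)
    (hW' : ∀ t : ℝ, 0 < t → (t : EReal) < T →
      HasDerivAt W (U t + V t - W t) t)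
    (τ : ℝ) :
    ∃ C : ℝ, 0 < C ∧ ∀ t : ℝ, 0 < t → ((t + τ : ℝ) : EReal) < T →
      ∫ s in t..t + τ, ((∫ x, u s x ^ 2 ∂𝔪) + ∫ x, v s x ^ 2 ∂𝔪) ≤ C := by
  have hQ_nonneg : ∀ s, 0 ≤ (∫ x, u s x ^ 2 ∂𝔪) + ∫ x, v s x ^ 2 ∂𝔪 := fun s =>
    add_nonneg (integral_nonneg fun x => sq_nonneg _) (integral_nonneg fun x => sq_nonneg _)
  rcases lt_or_ge τ 0 with hτ | hτ
  · refine ⟨1, one_pos, fun t _ _ => ?_⟩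
    rw [intervalIntegral.integral_symm]
    linarith [intervalIntegral.integral_nonneg_of_forall (μ := volume) (by linarith : t + τ ≤ t)
      hQ_nonneg]
  set a := 1 + r ^ 2 / (2 * μ₁ * μ₂)
  set G : ℝ → ℝ := fun s => a * U s + V s + (a + 2) * W s
  set κ := min (μ₁ / 2) (μ₂ / 4)
  set K := (a + 3) ^ 2 / (4 * (μ₁ / 2)) * 𝔪.real univ + (a + 3) ^ 2 / (4 * (μ₂ / 4)) * 𝔪.real univ
  have ha₀ : 0 ≤ a := by positivity
  have ha : a * μ₁ = μ₁ + r ^ 2 / (2 * μ₂) := by simp only [a]; field_simp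
  have hκ : 0 < κ := lt_min (by positivity) (by positivity)
  refine ⟨max 1 ((K * τ + max (G 0) (K / (a + 2)⁻¹)) / κ), lt_max_of_lt_left one_pos,
    fun t ht htT => le_max_of_le_right ((le_div_iff₀' hκ).2 ?_)⟩
  rw [← intervalIntegral.integral_const_mul]
  refine integral_le_of_hasDerivAt_add_mul_add_le (G := G)
    (q := fun s => κ * ((∫ x, u s x ^ 2 ∂𝔪) + ∫ x, v s x ^ 2 ∂𝔪)) (by positivity)
    (((continuousOn_const.mul hUc).add hVc).add (continuousOn_const.mul hWc))
    (fun s hs hsT => (((hU' s hs hsT).const_mul a).add (hV' s hs hsT)).add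
      ((hW' s hs hsT).const_mul (a + 2)))
    (fun s _ _ => by
      simp only [G, hU, hV, hW]
      exact add_nonneg (add_nonneg (mul_nonneg ha₀ (integral_nonneg (hu0 s)))
        (integral_nonneg (hv0 s))) (mul_nonneg (by positivity) (integral_nonneg (hw0 s))))
    ((hu2loc.add hv2loc).smul κ)
    (fun s _ _ => mul_nonneg hκ.le (hQ_nonneg s))
    (fun s hs hsT => by
      simpa only [G, hU, hV] using integral_lyapunov_dissipation_le (W := W s) hμ₁ hμ₂ ha₀ ha
        (hu0 s) (hv0 s) (hui s hs.le hsT) (hvi s hs.le hsT) (hu2 s hs.le hsT) (hv2 s hs.le hsT)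
        (huv s hs.le hsT)) ht hτ htT

/-- Uniform sliding-window space-time L² bound (display (3.71) in Lemma 4.2) on an abstract
finite measure space: under the mass identities obtained by integrating the Alopecia Areata
system with quadratic degradation, with `τ = min{1, T/4}` if `T < ∞` and `τ = 1` otherwise,
the quantity `∫_t^{t+τ} (∫ u² + ∫ v²)` is bounded uniformly in `t ∈ (0, T-τ)`. -/
theorem stmt_5 {X : Type*} [MeasurableSpace X] (𝔪 : Measure X) [IsFiniteMeasure 𝔪]
    (T : EReal) (hT : 0 < T)
    (μ₁ μ₂ r : ℝ) (hμ₁ : 0 < μ₁) (hμ₂ : 0 < μ₂) (hr : 0 < r)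
    (u v w : ℝ → X → ℝ)
    (hum : ∀ t : ℝ, Measurable (u t)) (hvm : ∀ t : ℝ, Measurable (v t))
    (hwm : ∀ t : ℝ, Measurable (w t))
    (hu0 : ∀ t x, 0 ≤ u t x) (hv0 : ∀ t x, 0 ≤ v t x) (hw0 : ∀ t x, 0 ≤ w t x)
    (hui : ∀ t : ℝ, 0 ≤ t → (t : EReal) < T → Integrable (u t) 𝔪)
    (hvi : ∀ t : ℝ, 0 ≤ t → (t : EReal) < T → Integrable (v t) 𝔪)
    (hwi : ∀ t : ℝ, 0 ≤ t → (t : EReal) < T → Integrable (w t) 𝔪)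
    (hu2 : ∀ t : ℝ, 0 ≤ t → (t : EReal) < T → Integrable (fun x => u t x ^ 2) 𝔪)
    (hv2 : ∀ t : ℝ, 0 ≤ t → (t : EReal) < T → Integrable (fun x => v t x ^ 2) 𝔪)
    (huv : ∀ t : ℝ, 0 ≤ t → (t : EReal) < T → Integrable (fun x => u t x * v t x) 𝔪)
    (U V W : ℝ → ℝ)
    (hU : ∀ t, U t = ∫ x, u t x ∂𝔪) (hV : ∀ t, V t = ∫ x, v t x ∂𝔪)
    (hW : ∀ t, W t = ∫ x, w t x ∂𝔪)
    (hUc : ContinuousOn U {t : ℝ | 0 ≤ t ∧ (t : EReal) < T})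
    (hVc : ContinuousOn V {t : ℝ | 0 ≤ t ∧ (t : EReal) < T})
    (hWc : ContinuousOn W {t : ℝ | 0 ≤ t ∧ (t : EReal) < T})
    (hu2loc : LocallyIntegrableOn (fun t => ∫ x, u t x ^ 2 ∂𝔪)
      {t : ℝ | 0 < t ∧ (t : EReal) < T})
    (hv2loc : LocallyIntegrableOn (fun t => ∫ x, v t x ^ 2 ∂𝔪)
      {t : ℝ | 0 < t ∧ (t : EReal) < T})
    (hU' : ∀ t : ℝ, 0 < t → (t : EReal) < T →
      HasDerivAt U (W t - μ₁ * ∫ x, u t x ^ 2 ∂𝔪) t)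
    (hV' : ∀ t : ℝ, 0 < t → (t : EReal) < T →
      HasDerivAt V (W t + r * (∫ x, u t x * v t x ∂𝔪) - μ₂ * ∫ x, v t x ^ 2 ∂𝔪) t)
    (hW' : ∀ t : ℝ, 0 < t → (t : EReal) < T →
      HasDerivAt W (U t + V t - W t) t)
    (τ : ℝ) (hτ : τ = if T = ⊤ then 1 else min 1 (T.toReal / 4)) :
    ∃ C : ℝ, 0 < C ∧ ∀ t : ℝ, 0 < t → ((t + τ : ℝ) : EReal) < T →
      ∫ s in t..t + τ, ((∫ x, u s x ^ 2 ∂𝔪) + ∫ x, v s x ^ 2 ∂𝔪) ≤ C :=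
  stmt_5_general 𝔪 T μ₁ μ₂ r hμ₁ hμ₂ u v w hu0 hv0 hw0 hui hvi hu2 hv2 huv U V W hU hV hW hUc hVc
    hWc hu2loc hv2loc hU' hV' hW' τ
end

section
/- Let T ∈ (0,∞], τ ∈ (0,T) and B > 0. Suppose y : [0,T) → [0,∞) is continuous on [0,T) and differentiable on (0,T), D, h : (0,T) → [0,∞) are locally integrable, the inequality y'(t) + y(t) + D(t) ≤ h(t) holds for all t ∈ (0,T), and ∫_t^{t+τ} h(s) ds ≤ B for all t ∈ (0, T−τ). Then there exists a constant C > 0 such that y(t) ≤ C for all t ∈ (0,T) and ∫_t^{t+τ} D(s) ds ≤ C for all t ∈ (0, T−τ); in fact one may take C = max{ y(0) + B , B/τ + 2B } + B. -/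
/-!
Integrating `y' + y + D ≤ h` over `[a, b]` gives `y b - y a + ∫ D ≤ ∫ h`. For `t ≤ τ`, letting
`a → 0⁺` yields `y t ≤ y 0 + B`. For `t > τ`, the integrating factor `e^{s - t}` on the window
`[t - τ, t]` yields `y t ≤ e^{-τ} y (t - τ) + B`, so `y` stays below every `M ≥ y 0 + B` with
`e^{-τ} M + B ≤ M`; since `(1 + τ) e^{-τ} ≤ 1`, `M = max (y 0 + B) (B / τ + B)` works. The
integrated inequality on `[t, t + τ]` then bounds `∫ D` by `B + y t`.
-/

open MeasureTheory Set Filter Topology Real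

theorem sub_add_integral_add_integral_le_integral {y D h : ℝ → ℝ} {a b : ℝ} (hab : a ≤ b)
    (hyc : ContinuousOn y (Icc a b)) (hyd : ∀ x ∈ Ioo a b, DifferentiableAt ℝ y x)
    (hD : IntegrableOn D (Icc a b)) (hh : IntegrableOn h (Icc a b))
    (hle : ∀ x ∈ Ioo a b, deriv y x + y x + D x ≤ h x) :
    y b - y a + (∫ s in a..b, y s) + ∫ s in a..b, D s ≤ ∫ s in a..b, h s := by
  have hy : IntegrableOn y (Icc a b) := hyc.integrableOn_compact isCompact_Icc
  have hii : ∀ {f : ℝ → ℝ}, IntegrableOn f (Icc a b) → IntervalIntegrable f volume a b :=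
    (intervalIntegrable_iff_integrableOn_Icc_of_le hab).2
  have hFTC := intervalIntegral.sub_le_integral_of_hasDeriv_right_of_le hab hyc
    (fun x hx => (hyd x hx).hasDerivAt.hasDerivWithinAt) ((hh.sub hy).sub hD)
    (fun x hx => by simp only [Pi.sub_apply]; linarith [hle x hx])
  simp only [Pi.sub_apply] at hFTC
  rw [intervalIntegral.integral_sub ((hii hh).sub (hii hy)) (hii hD),
    intervalIntegral.integral_sub (hii hh) (hii hy)] at hFTC
  linarith

theorem le_exp_sub_mul_add_integral {y h : ℝ → ℝ} {a b : ℝ} (hab : a ≤ b)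
    (hyc : ContinuousOn y (Icc a b)) (hyd : ∀ x ∈ Ioo a b, DifferentiableAt ℝ y x)
    (hh : IntegrableOn h (Icc a b)) (hh0 : ∀ x ∈ Icc a b, 0 ≤ h x)
    (hle : ∀ x ∈ Ioo a b, deriv y x + y x ≤ h x) :
    y b ≤ exp (a - b) * y a + ∫ s in a..b, h s := by
  have he : Continuous fun s => exp (s - b) := by fun_prop
  have hderiv : ∀ x ∈ Ioo a b, HasDerivWithinAt (fun s => exp (s - b) * y s)
      (exp (x - b) * y x + exp (x - b) * deriv y x) (Ioi x) x := fun x hx => by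
    have hexp : HasDerivAt (fun s => exp (s - b)) (exp (x - b)) x := by
      simpa using ((hasDerivAt_id x).sub_const b).exp
    exact (hexp.mul (hyd x hx).hasDerivAt).hasDerivWithinAt
  have hFTC := intervalIntegral.sub_le_integral_of_hasDeriv_right_of_le hab
    (he.continuousOn.mul hyc) hderiv (hh.continuousOn_mul he.continuousOn isCompact_Icc)
    fun x hx => by rw [← mul_add, add_comm]; gcongr; exact hle x hx
  have hweight : ∫ s in a..b, exp (s - b) * h s ≤ ∫ s in a..b, h s := by
    refine intervalIntegral.integral_mono_on hab
      ((intervalIntegrable_iff_integrableOn_Icc_of_le hab).2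
        (hh.continuousOn_mul he.continuousOn isCompact_Icc))
      ((intervalIntegrable_iff_integrableOn_Icc_of_le hab).2 hh) fun s hs => ?_
    exact mul_le_of_le_one_left (hh0 s hs) (exp_le_one_iff.2 (by linarith [hs.2]))
  simp only [Pi.mul_apply, sub_self, exp_zero, one_mul] at hFTC
  linarith

theorem forall_pos_of_Ioc_of_step {τ : ℝ} {P : ℝ → Prop} (hτ : 0 < τ)
    (hbase : ∀ t ∈ Ioc 0 τ, P t) (hstep : ∀ t, τ < t → P (t - τ) → P t) :
    ∀ t, 0 < t → P t := by
  have hwindows : ∀ n : ℕ, ∀ t ∈ Ioc 0 (n * τ + τ), P t := by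
    intro n
    induction n with
    | zero => simpa using hbase
    | succ n ih =>
      rintro t ⟨ht, htn⟩
      rcases le_or_gt t τ with htτ | htτ
      · exact hbase t ⟨ht, htτ⟩
      · exact hstep t htτ (ih (t - τ) ⟨by linarith, by push_cast at htn; linarith⟩)
  intro t ht
  obtain ⟨n, hn⟩ := exists_nat_gt (t / τ)
  rw [div_lt_iff₀ hτ] at hn
  exact hwindows n t ⟨ht, by linarith⟩

theorem exp_neg_mul_add_le {B τ M : ℝ} (hB : 0 ≤ B) (hτ : 0 < τ) (hM : B / τ + B ≤ M) :
    exp (-τ) * M + B ≤ M := by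
  have hexp : exp (-τ) * (1 + τ) ≤ 1 := by
    rw [exp_neg, inv_mul_le_iff₀ (exp_pos τ)]
    linarith [add_one_le_exp τ]
  have hBτ : B / τ * τ = B := div_mul_cancel₀ B hτ.ne'
  nlinarith [mul_le_mul_of_nonneg_left hM (sub_nonneg.2 (exp_le_one_iff.2 (neg_nonpos.2 hτ.le))),
    mul_le_mul_of_nonneg_left hexp (div_nonneg hB hτ.le)]

theorem Icc_subset_setOf_pos_lt {T : EReal} {a b : ℝ} (ha : 0 < a) (hb : (b : EReal) < T) :
    Icc a b ⊆ {t : ℝ | 0 < t ∧ (t : EReal) < T} :=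
  fun _ hx => ⟨ha.trans_le hx.1, (EReal.coe_le_coe_iff.2 hx.2).trans_lt hb⟩

/-- `T : EReal` so that `T = ⊤` covers the global case `(0, ∞)`. -/
structure EnergyInequality (T : EReal) (y D h : ℝ → ℝ) : Prop where
  nonneg_y : ∀ t : ℝ, 0 ≤ t → (t : EReal) < T → 0 ≤ y t
  continuousOn : ContinuousOn y {t : ℝ | 0 ≤ t ∧ (t : EReal) < T}
  differentiableAt : ∀ t : ℝ, 0 < t → (t : EReal) < T → DifferentiableAt ℝ y t
  nonneg_D : ∀ t : ℝ, 0 < t → (t : EReal) < T → 0 ≤ D t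
  nonneg_h : ∀ t : ℝ, 0 < t → (t : EReal) < T → 0 ≤ h t
  locallyIntegrableOn_D : LocallyIntegrableOn D {t : ℝ | 0 < t ∧ (t : EReal) < T}
  locallyIntegrableOn_h : LocallyIntegrableOn h {t : ℝ | 0 < t ∧ (t : EReal) < T}
  deriv_add_add_le : ∀ t : ℝ, 0 < t → (t : EReal) < T → deriv y t + y t + D t ≤ h t

namespace EnergyInequality

variable {T : EReal} {y D h : ℝ → ℝ} {a b t τ B : ℝ}

theorem continuousOn_Icc (hE : EnergyInequality T y D h) (ha : 0 < a) (hb : (b : EReal) < T) :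
    ContinuousOn y (Icc a b) :=
  hE.continuousOn.mono ((Icc_subset_setOf_pos_lt ha hb).trans fun _ hx => ⟨hx.1.le, hx.2⟩)

theorem differentiableAt_of_mem_Ioo (hE : EnergyInequality T y D h) (ha : 0 < a)
    (hb : (b : EReal) < T) : ∀ x ∈ Ioo a b, DifferentiableAt ℝ y x := fun x hx =>
  hE.differentiableAt x (Icc_subset_setOf_pos_lt ha hb (Ioo_subset_Icc_self hx)).1
    (Icc_subset_setOf_pos_lt ha hb (Ioo_subset_Icc_self hx)).2

theorem integrableOn_Icc_D (hE : EnergyInequality T y D h) (ha : 0 < a) (hb : (b : EReal) < T) :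
    IntegrableOn D (Icc a b) :=
  hE.locallyIntegrableOn_D.integrableOn_compact_subset (Icc_subset_setOf_pos_lt ha hb)
    isCompact_Icc

theorem integrableOn_Icc_h (hE : EnergyInequality T y D h) (ha : 0 < a) (hb : (b : EReal) < T) :
    IntegrableOn h (Icc a b) :=
  hE.locallyIntegrableOn_h.integrableOn_compact_subset (Icc_subset_setOf_pos_lt ha hb)
    isCompact_Icc

theorem sub_add_integral_le (hE : EnergyInequality T y D h) (ha : 0 < a) (hab : a ≤ b)
    (hb : (b : EReal) < T) : y b - y a + ∫ s in a..b, D s ≤ ∫ s in a..b, h s := by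
  have hI := Icc_subset_setOf_pos_lt ha hb
  have hy : 0 ≤ ∫ s in a..b, y s :=
    intervalIntegral.integral_nonneg hab fun x hx => hE.nonneg_y x (hI hx).1.le (hI hx).2
  have := sub_add_integral_add_integral_le_integral hab (hE.continuousOn_Icc ha hb)
    (hE.differentiableAt_of_mem_Ioo ha hb) (hE.integrableOn_Icc_D ha hb)
    (hE.integrableOn_Icc_h ha hb) fun x hx =>
      hE.deriv_add_add_le x (hI (Ioo_subset_Icc_self hx)).1 (hI (Ioo_subset_Icc_self hx)).2
  linarith

theorem le_exp_neg_mul_add (hE : EnergyInequality T y D h) (hτ : 0 ≤ τ)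
    (hhB : ∀ t : ℝ, 0 < t → ((t + τ : ℝ) : EReal) < T → ∫ s in t..t + τ, h s ≤ B)
    (htτ : τ < t) (ht : (t : EReal) < T) : y t ≤ exp (-τ) * y (t - τ) + B := by
  have hpos : 0 < t - τ := sub_pos.2 htτ
  have hI := Icc_subset_setOf_pos_lt hpos ht
  have := le_exp_sub_mul_add_integral (sub_le_self t hτ) (hE.continuousOn_Icc hpos ht)
    (hE.differentiableAt_of_mem_Ioo hpos ht) (hE.integrableOn_Icc_h hpos ht)
    (fun x hx => hE.nonneg_h x (hI hx).1 (hI hx).2) fun x hx => by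
      obtain ⟨hx0, hxT⟩ := hI (Ioo_subset_Icc_self hx)
      linarith [hE.deriv_add_add_le x hx0 hxT, hE.nonneg_D x hx0 hxT]
  have hwindow := hhB (t - τ) hpos (by rwa [sub_add_cancel])
  rw [sub_add_cancel] at hwindow
  rw [sub_sub_cancel_left] at this
  linarith

theorem le_apply_zero_add_of_le (hE : EnergyInequality T y D h)
    (hhB : ∀ t : ℝ, 0 < t → ((t + τ : ℝ) : EReal) < T → ∫ s in t..t + τ, h s ≤ B)
    (hτT : (τ : EReal) < T) (ht : 0 < t) (htτ : t ≤ τ) (htT : (t : EReal) < T) :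
    y t ≤ y 0 + B := by
  have hlim : Tendsto y (𝓝[>] 0) (𝓝 (y 0)) := by
    have h0T : ((0 : ℝ) : EReal) < T := (EReal.coe_lt_coe_iff.2 ht).trans htT
    refine ((hE.continuousOn 0 ⟨le_rfl, h0T⟩).tendsto).mono_left
      (nhdsWithin_le_of_mem (mem_of_superset (Ioo_mem_nhdsGT ht) fun x hx => ?_))
    exact ⟨hx.1.le, (EReal.coe_le_coe_iff.2 hx.2.le).trans_lt htT⟩
  have hwindow : ∀ᶠ a in 𝓝[>] (0 : ℝ), ((a + τ : ℝ) : EReal) < T := by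
    refine Tendsto.eventually_lt_const hτT (Tendsto.mono_left ?_ nhdsWithin_le_nhds)
    exact (continuous_coe_real_ereal.tendsto τ).comp
      ((continuous_add_const τ).tendsto' 0 τ (zero_add τ))
  have hnear : ∀ᶠ a in 𝓝[>] (0 : ℝ), y t - B ≤ y a := by
    filter_upwards [Ioo_mem_nhdsGT ht, hwindow] with a ⟨ha, hat⟩ haτ
    have hI := Icc_subset_setOf_pos_lt ha haτ
    have hsub : ∫ s in a..t, h s ≤ ∫ s in a..a + τ, h s :=
      intervalIntegral.integral_mono_interval le_rfl hat.le (by linarith)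
        (ae_restrict_of_forall_mem measurableSet_Ioc fun x hx =>
          hE.nonneg_h x (hI (Ioc_subset_Icc_self hx)).1 (hI (Ioc_subset_Icc_self hx)).2)
        ((intervalIntegrable_iff_integrableOn_Icc_of_le (by linarith)).2
          (hE.integrableOn_Icc_h ha haτ))
    have hD : 0 ≤ ∫ s in a..t, D s := intervalIntegral.integral_nonneg hat.le fun x hx =>
      hE.nonneg_D x (ha.trans_le hx.1) ((EReal.coe_le_coe_iff.2 hx.2).trans_lt htT)
    linarith [hE.sub_add_integral_le ha hat.le htT, hhB a ha haτ]
  linarith [ge_of_tendsto hlim hnear]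

theorem le_max (hE : EnergyInequality T y D h) (hτ : 0 < τ) (hB : 0 ≤ B)
    (hhB : ∀ t : ℝ, 0 < t → ((t + τ : ℝ) : EReal) < T → ∫ s in t..t + τ, h s ≤ B)
    (hτT : (τ : EReal) < T) :
    ∀ t : ℝ, 0 < t → (t : EReal) < T → y t ≤ max (y 0 + B) (B / τ + B) := by
  set M := max (y 0 + B) (B / τ + B)
  refine forall_pos_of_Ioc_of_step (P := fun t : ℝ => (t : EReal) < T → y t ≤ M) hτ ?_ ?_
  · rintro t ⟨ht, htτ⟩ htT
    exact (hE.le_apply_zero_add_of_le hhB hτT ht htτ htT).trans (le_max_left _ _)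
  intro t htτ ih htT
  have hprev := ih ((EReal.coe_le_coe_iff.2 (sub_le_self t hτ.le)).trans_lt htT)
  calc y t ≤ exp (-τ) * y (t - τ) + B := hE.le_exp_neg_mul_add hτ.le hhB htτ htT
    _ ≤ exp (-τ) * M + B := by gcongr
    _ ≤ M := exp_neg_mul_add_le hB hτ (le_max_right _ _)

end EnergyInequality

/-- Abstract energy lemma (displays (4.10)-(4.12) in Lemma 4.2): if `y ≥ 0` is continuous on
`[0,T)`, differentiable on `(0,T)`, `D, h ≥ 0` are locally integrable on `(0,T)`,
`y' + y + D ≤ h` on `(0,T)` and `∫_t^{t+τ} h ≤ B` on `(0,T-τ)`, then with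
`C = max{y(0)+B, B/τ+2B} + B` one has `y ≤ C` on `(0,T)` and `∫_t^{t+τ} D ≤ C` on `(0,T-τ)`.
Here `T ∈ (0,∞]` is modelled as an extended real number. -/
theorem stmt_12 (T : EReal) (τ B : ℝ) (hT : 0 < T) (hτ : 0 < τ) (hτT : (τ : EReal) < T)
    (hB : 0 < B) (y D h : ℝ → ℝ)
    (hy0 : ∀ t : ℝ, 0 ≤ t → (t : EReal) < T → 0 ≤ y t)
    (hyc : ContinuousOn y {t : ℝ | 0 ≤ t ∧ (t : EReal) < T})
    (hyd : ∀ t : ℝ, 0 < t → (t : EReal) < T → DifferentiableAt ℝ y t)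
    (hD0 : ∀ t : ℝ, 0 < t → (t : EReal) < T → 0 ≤ D t)
    (hh0 : ∀ t : ℝ, 0 < t → (t : EReal) < T → 0 ≤ h t)
    (hDloc : LocallyIntegrableOn D {t : ℝ | 0 < t ∧ (t : EReal) < T})
    (hhloc : LocallyIntegrableOn h {t : ℝ | 0 < t ∧ (t : EReal) < T})
    (hineq : ∀ t : ℝ, 0 < t → (t : EReal) < T → deriv y t + y t + D t ≤ h t)
    (hhB : ∀ t : ℝ, 0 < t → ((t + τ : ℝ) : EReal) < T → ∫ s in t..t + τ, h s ≤ B) :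
    ∃ C : ℝ, 0 < C ∧ C = max (y 0 + B) (B / τ + 2 * B) + B ∧
      (∀ t : ℝ, 0 < t → (t : EReal) < T → y t ≤ C) ∧
      (∀ t : ℝ, 0 < t → ((t + τ : ℝ) : EReal) < T → ∫ s in t..t + τ, D s ≤ C) := by
  have hE : EnergyInequality T y D h := ⟨hy0, hyc, hyd, hD0, hh0, hDloc, hhloc, hineq⟩
  have hy := hE.le_max hτ hB.le hhB hτT
  have hM : max (y 0 + B) (B / τ + B) ≤ max (y 0 + B) (B / τ + 2 * B) :=
    max_le_max le_rfl (by linarith)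
  refine ⟨_, ?_, rfl, fun t ht htT => by linarith [hy t ht htT], fun t ht htT => ?_⟩
  · linarith [le_max_left (y 0 + B) (B / τ + 2 * B), hy0 0 le_rfl hT]
  have hle : t ≤ t + τ := le_add_of_nonneg_right hτ.le
  have htT' : (t : EReal) < T := (EReal.coe_le_coe_iff.2 hle).trans_lt htT
  linarith [hE.sub_add_integral_le ht hle htT, hhB t ht htT, hy t ht htT',
    hy0 (t + τ) (by positivity) htT]
end
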